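/- Let A ∈ ℝ^{n×n}, B ∈ ℝ^{n×m}, γ ∈ (0,1]. Let E*, E† ∈ ℝ^{m×m} be symmetric positive definite with ‖E*^{-1}‖ < 1, and let P*, P† ∈ ℝ^{n×n} be symmetric positive semi-definite. Define K* = −γ·(E* + γ·Bᵀ·P*·B)^{-1}·Bᵀ·P*·A and K† = −γ·(E† + γ·Bᵀ·P†·B)^{-1}·Bᵀ·P†·A. Suppose ‖E† − E*‖ ≤ ε and ‖P† − P*‖ ≤ f(ε) for some function f : ℝ₊ → ℝ₊, and suppose ε ≤ λ_min(E*)/2. Then ‖K† − K*‖ ≤ Γ₃·f(ε) + Γ₄·ε, where Γ₃ = (2γ/λ_min(E*))·max{‖A‖, ‖B‖}²·(‖K*‖ + 1) and Γ₄ = (2/λ_min(E*))·‖K*‖. -/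

import Mathlib

/-!
With `M = E* + γ BᵀP*B` and `M† = E† + γ BᵀP†B` we have `M K* = -γ BᵀP*A` and
`M† K† = -γ BᵀP†A`; subtracting gives
`K† - K* = -M†⁻¹ ((E† - E*) K* + γ Bᵀ (P† - P*) (A + B K*))`.
In the Loewner order `E* ≥ λ_min(E*)`, `E† - E* ≥ -‖E† - E*‖ ≥ -ε` and `BᵀP†B ≥ 0`,
so `M† ≥ λ_min(E*)/2` and hence `‖M†⁻¹‖ ≤ 2/λ_min(E*)`.
-/

open Matrix

/-- The spectral norm (operator 2-norm) of a real matrix. -/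
noncomputable def specNorm {m n : ℕ} (M : Matrix (Fin m) (Fin n) ℝ) : ℝ :=
  ‖LinearMap.toContinuousLinearMap (Matrix.toEuclideanLin M)‖

/-- The smallest eigenvalue of a real symmetric matrix (infimum of its real spectrum). -/
noncomputable def lamMin {n : ℕ} (M : Matrix (Fin n) (Fin n) ℝ) : ℝ :=
  sInf (spectrum ℝ M)

open scoped Matrix.Norms.L2Operator MatrixOrder RealInnerProductSpace

lemma specNorm_eq_l2_opNorm {m n : ℕ} (M : Matrix (Fin m) (Fin n) ℝ) : specNorm M = ‖M‖ :=
  rfl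

namespace Matrix

lemma l2_opNorm_transpose {m n : Type*} [Fintype m] [Fintype n] [DecidableEq m]
    [DecidableEq n] (B : Matrix m n ℝ) : ‖Bᵀ‖ = ‖B‖ := by
  rw [← conjTranspose_eq_transpose_of_trivial, l2_opNorm_conjTranspose]

lemma PosSemidef.smul_transpose_mul_mul_same {m n : Type*} [Fintype m] [Fintype n]
    {P : Matrix n n ℝ} (hP : P.PosSemidef) (B : Matrix n m ℝ) {γ : ℝ} (hγ : 0 ≤ γ) :
    (γ • (Bᵀ * P * B)).PosSemidef := by
  simpa only [conjTranspose_eq_transpose_of_trivial] using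
    (hP.conjTranspose_mul_mul_same B).smul hγ

variable {n : Type*} [Fintype n] [DecidableEq n]

lemma IsHermitian.neg_algebraMap_l2_opNorm_le {D : Matrix n n ℝ} (hD : D.IsHermitian) :
    algebraMap ℝ _ (-‖D‖) ≤ D := by
  refine algebraMap_le_of_le_spectrum (fun x hx => neg_le_of_abs_le ?_) hD
  -- `n` may be empty, so `NormOneClass` is not available
  have h_one : ‖(1 : Matrix n n ℝ)‖ ≤ 1 := by
    rw [cstar_norm_def, map_one]
    exact ContinuousLinearMap.norm_id_le
  exact (spectrum.norm_le_norm_mul_of_mem hx).trans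
    (mul_le_of_le_one_right (norm_nonneg D) h_one)

lemma mul_norm_le_norm_toEuclideanCLM_of_algebraMap_le {M : Matrix n n ℝ} {c : ℝ}
    (h : algebraMap ℝ _ c ≤ M) (x : EuclideanSpace ℝ n) :
    c * ‖x‖ ≤ ‖toEuclideanCLM (𝕜 := ℝ) M x‖ := by
  have hquad : c * ‖x‖ ^ 2 ≤ ⟪x, toEuclideanCLM (𝕜 := ℝ) M x⟫ := by
    have := (le_iff.1 h).dotProduct_mulVec_nonneg x.ofLp
    rw [sub_mulVec, Algebra.algebraMap_eq_smul_one, smul_mulVec, one_mulVec, dotProduct_sub,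
      dotProduct_smul, star_trivial, sub_nonneg] at this
    rwa [inner_toEuclideanCLM, ← real_inner_self_eq_norm_sq,
      EuclideanSpace.inner_eq_star_dotProduct, star_trivial]
  rcases (norm_nonneg x).eq_or_lt with hx | hx
  · rw [← hx, mul_zero]
    exact norm_nonneg _
  · refine le_of_mul_le_mul_right ?_ hx
    nlinarith [real_inner_le_norm x (toEuclideanCLM (𝕜 := ℝ) M x)]

lemma isUnit_of_algebraMap_le {M : Matrix n n ℝ} {c : ℝ} (hc : 0 < c)
    (h : algebraMap ℝ _ c ≤ M) : IsUnit M := by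
  refine mulVec_injective_iff_isUnit.1 fun v w hvw => sub_eq_zero.1 ?_
  have := mul_norm_le_norm_toEuclideanCLM_of_algebraMap_le h (WithLp.toLp 2 (v - w))
  rw [toEuclideanCLM_toLp, mulVec_sub, hvw, sub_self, WithLp.toLp_zero, norm_zero] at this
  exact (WithLp.toLp_eq_zero 2).1 (norm_le_zero_iff.1 (nonpos_of_mul_nonpos_right this hc))

lemma l2_opNorm_inv_le_of_algebraMap_le {M : Matrix n n ℝ} {c : ℝ} (hc : 0 < c)
    (h : algebraMap ℝ _ c ≤ M) : ‖M⁻¹‖ ≤ c⁻¹ := by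
  have hM := (isUnit_iff_isUnit_det M).1 (isUnit_of_algebraMap_le hc h)
  refine (toEuclideanCLM (𝕜 := ℝ) M⁻¹).opNorm_le_bound (by positivity) fun y => ?_
  have := mul_norm_le_norm_toEuclideanCLM_of_algebraMap_le h (toEuclideanCLM (𝕜 := ℝ) M⁻¹ y)
  rw [← mul_apply_eq_comp, ← map_mul, mul_nonsing_inv M hM, map_one, one_apply_eq_self] at this
  rwa [inv_mul_eq_div, le_div_iff₀' hc]

end Matrix

section lamMin

variable {k : ℕ}

lemma algebraMap_lamMin_le {M : Matrix (Fin k) (Fin k) ℝ} (hM : M.IsHermitian) :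
    algebraMap ℝ _ (lamMin M) ≤ M :=
  algebraMap_le_of_le_spectrum (fun _ hx => csInf_le M.finite_real_spectrum.bddBelow hx) hM

lemma lamMin_nonneg {M : Matrix (Fin k) (Fin k) ℝ} (hM : M.PosDef) : 0 ≤ lamMin M :=
  Real.sInf_nonneg fun _ hx =>
    ((StarOrderedRing.isStrictlyPositive_iff_spectrum_pos M hM.1).1 hM.isStrictlyPositive _ hx).le

lemma lamMin_pos [NeZero k] {M : Matrix (Fin k) (Fin k) ℝ} (hM : M.PosDef) : 0 < lamMin M := by
  have hne : (spectrum ℝ M).Nonempty := by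
    rw [hM.1.spectrum_real_eq_range_eigenvalues]
    exact Set.range_nonempty _
  exact (StarOrderedRing.isStrictlyPositive_iff_spectrum_pos M hM.1).1 hM.isStrictlyPositive _
    (hne.csInf_mem M.finite_real_spectrum)

lemma algebraMap_lamMin_sub_l2_opNorm_le {E E' Q : Matrix (Fin k) (Fin k) ℝ}
    (hE : E.IsHermitian) (hE' : E'.IsHermitian) (hQ : Q.PosSemidef) :
    algebraMap ℝ _ (lamMin E - ‖E' - E‖) ≤ E' + Q :=
  calc algebraMap ℝ _ (lamMin E - ‖E' - E‖)
      = algebraMap ℝ _ (lamMin E) + algebraMap ℝ _ (-‖E' - E‖) + 0 := by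
        rw [add_zero, ← map_add, sub_eq_add_neg]
    _ ≤ E + (E' - E) + Q := by
        gcongr
        · exact algebraMap_lamMin_le hE
        · exact (hE'.sub hE).neg_algebraMap_l2_opNorm_le
        · exact hQ.nonneg
    _ = E' + Q := by abel

end lamMin

section Gain

variable {m n : Type*} [Fintype m] [DecidableEq m] [Fintype n] {R : Type*} [CommRing R]

noncomputable def lqGain (A : Matrix n n R) (B : Matrix n m R) (γ : R) (E : Matrix m m R)
    (P : Matrix n n R) : Matrix m n R :=
  -(γ • ((E + γ • (Bᵀ * P * B))⁻¹ * (Bᵀ * P * A)))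

variable {A : Matrix n n R} {B : Matrix n m R} {γ : R}

lemma mul_lqGain {E : Matrix m m R} {P : Matrix n n R}
    (h : IsUnit (E + γ • (Bᵀ * P * B)).det) :
    (E + γ • (Bᵀ * P * B)) * lqGain A B γ E P = -(γ • (Bᵀ * P * A)) := by
  rw [lqGain, Matrix.mul_neg, Matrix.mul_smul, ← Matrix.mul_assoc, mul_nonsing_inv _ h,
    Matrix.one_mul]

lemma lqGain_sub_lqGain {E E' : Matrix m m R} {P P' : Matrix n n R}
    (h : IsUnit (E + γ • (Bᵀ * P * B)).det) (h' : IsUnit (E' + γ • (Bᵀ * P' * B)).det) :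
    lqGain A B γ E' P' - lqGain A B γ E P =
      -((E' + γ • (Bᵀ * P' * B))⁻¹ * ((E' - E) * lqGain A B γ E P +
        γ • (Bᵀ * (P' - P) * (A + B * lqGain A B γ E P)))) := by
  set K := lqGain A B γ E P
  have hsplit : E' + γ • (Bᵀ * P' * B) =
      (E + γ • (Bᵀ * P * B)) + ((E' - E) + γ • (Bᵀ * (P' - P) * B)) := by
    simp only [Matrix.mul_sub, Matrix.sub_mul, smul_sub]
    abel
  have hmul : (E' + γ • (Bᵀ * P' * B)) * (lqGain A B γ E' P' - K) =
      -((E' - E) * K + γ • (Bᵀ * (P' - P) * (A + B * K))) := by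
    rw [Matrix.mul_sub, mul_lqGain h', hsplit, Matrix.add_mul, mul_lqGain h]
    simp only [Matrix.mul_add, Matrix.add_mul, Matrix.mul_sub, Matrix.sub_mul, smul_sub, smul_add,
      Matrix.smul_mul, Matrix.mul_assoc]
    abel
  rw [← Matrix.mul_neg, ← hmul, ← Matrix.mul_assoc, nonsing_inv_mul _ h', Matrix.one_mul]

lemma l2_opNorm_lqGain_sub_lqGain_le [DecidableEq n] {A : Matrix n n ℝ} {B : Matrix n m ℝ}
    {γ : ℝ} (hγ : 0 ≤ γ) {E E' : Matrix m m ℝ} {P P' : Matrix n n ℝ}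
    (h : IsUnit (E + γ • (Bᵀ * P * B)).det) (h' : IsUnit (E' + γ • (Bᵀ * P' * B)).det) :
    ‖lqGain A B γ E' P' - lqGain A B γ E P‖ ≤ ‖(E' + γ • (Bᵀ * P' * B))⁻¹‖ *
      (‖E' - E‖ * ‖lqGain A B γ E P‖ +
        γ * ‖P' - P‖ * (‖B‖ * (‖A‖ + ‖B‖ * ‖lqGain A B γ E P‖))) := by
  set K := lqGain A B γ E P
  have hclosedLoop :
      ‖Bᵀ * (P' - P) * (A + B * K)‖ ≤ ‖P' - P‖ * (‖B‖ * (‖A‖ + ‖B‖ * ‖K‖)) :=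
    calc ‖Bᵀ * (P' - P) * (A + B * K)‖ ≤ ‖Bᵀ‖ * ‖P' - P‖ * ‖A + B * K‖ :=
          (l2_opNorm_mul _ _).trans (by gcongr; exact l2_opNorm_mul _ _)
      _ ≤ ‖B‖ * ‖P' - P‖ * (‖A‖ + ‖B‖ * ‖K‖) := by
        rw [l2_opNorm_transpose]
        gcongr
        exact (norm_add_le _ _).trans (by gcongr; exact l2_opNorm_mul _ _)
      _ = _ := by ring
  rw [lqGain_sub_lqGain h h', norm_neg]
  refine (l2_opNorm_mul _ _).trans (mul_le_mul_of_nonneg_left ?_ (norm_nonneg _))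
  calc ‖(E' - E) * K + γ • (Bᵀ * (P' - P) * (A + B * K))‖
      ≤ ‖E' - E‖ * ‖K‖ + γ * ‖Bᵀ * (P' - P) * (A + B * K)‖ := by
        refine (norm_add_le _ _).trans (add_le_add (l2_opNorm_mul _ _) ?_)
        rw [norm_smul, Real.norm_of_nonneg hγ]
    _ ≤ _ := by
        rw [mul_assoc γ]
        gcongr

end Gain

lemma mul_add_mul_le_max_sq {a b k : ℝ} (ha : 0 ≤ a) (hb : 0 ≤ b) (hk : 0 ≤ k) :
    b * (a + b * k) ≤ max a b ^ 2 * (k + 1) := by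
  have hab : b * a ≤ max a b ^ 2 := by
    rw [sq]
    exact mul_le_mul (le_max_right a b) (le_max_left a b) ha (hb.trans (le_max_right a b))
  have hbb : b * b ≤ max a b ^ 2 := by
    rw [sq]
    exact mul_self_le_mul_self hb (le_max_right a b)
  nlinarith

theorem optimal_gain_change_bound_general {n m : ℕ}
    (A : Matrix (Fin n) (Fin n) ℝ) (B : Matrix (Fin n) (Fin m) ℝ)
    (γ : ℝ) (hγ0 : 0 < γ)
    (Estar Edag : Matrix (Fin m) (Fin m) ℝ) (hEstar : Estar.PosDef) (hEdag : Edag.PosDef)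
    (Pstar Pdag : Matrix (Fin n) (Fin n) ℝ) (hPstar : Pstar.PosSemidef)
    (hPdag : Pdag.PosSemidef)
    (Kstar Kdag : Matrix (Fin m) (Fin n) ℝ)
    (hKstar : Kstar = -(γ • ((Estar + γ • (Bᵀ * Pstar * B))⁻¹ * (Bᵀ * Pstar * A))))
    (hKdag : Kdag = -(γ • ((Edag + γ • (Bᵀ * Pdag * B))⁻¹ * (Bᵀ * Pdag * A))))
    (f : ℝ → ℝ)
    (ε : ℝ)
    (hE : specNorm (Edag - Estar) ≤ ε) (hP : specNorm (Pdag - Pstar) ≤ f ε)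
    (hε : ε ≤ lamMin Estar / 2) :
    specNorm (Kdag - Kstar) ≤
      2 * γ / lamMin Estar * max (specNorm A) (specNorm B) ^ 2 * (specNorm Kstar + 1) * f ε +
        2 / lamMin Estar * specNorm Kstar * ε := by
  change Kstar = lqGain A B γ Estar Pstar at hKstar
  change Kdag = lqGain A B γ Edag Pdag at hKdag
  simp only [specNorm_eq_l2_opNorm] at hE hP ⊢
  have hε0 : 0 ≤ ε := (norm_nonneg _).trans hE
  have hfε : 0 ≤ f ε := (norm_nonneg _).trans hP
  rcases Nat.eq_zero_or_pos m with rfl | hm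
  · rw [Subsingleton.elim (Kdag - Kstar) 0, norm_zero]
    have := lamMin_nonneg hEstar
    positivity
  have : NeZero m := ⟨hm.ne'⟩
  set L := lamMin Estar
  have hL : 0 < L := lamMin_pos hEstar
  have hMdag : algebraMap ℝ _ (L / 2) ≤ Edag + γ • (Bᵀ * Pdag * B) :=
    le_trans (by gcongr; linarith) <| algebraMap_lamMin_sub_l2_opNorm_le hEstar.1 hEdag.1
      (hPdag.smul_transpose_mul_mul_same B hγ0.le)
  have hMdag_inv : ‖(Edag + γ • (Bᵀ * Pdag * B))⁻¹‖ ≤ 2 / L := by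
    simpa only [inv_div] using l2_opNorm_inv_le_of_algebraMap_le (half_pos hL) hMdag
  have hMstar_det : IsUnit (Estar + γ • (Bᵀ * Pstar * B)).det :=
    (isUnit_iff_isUnit_det _).1 <|
      (hEstar.add_posSemidef (hPstar.smul_transpose_mul_mul_same B hγ0.le)).isUnit
  have hMdag_det : IsUnit (Edag + γ • (Bᵀ * Pdag * B)).det :=
    (isUnit_iff_isUnit_det _).1 (isUnit_of_algebraMap_le (half_pos hL) hMdag)
  subst hKstar hKdag
  calc ‖lqGain A B γ Edag Pdag - lqGain A B γ Estar Pstar‖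
      ≤ _ := l2_opNorm_lqGain_sub_lqGain_le hγ0.le hMstar_det hMdag_det
    _ ≤ 2 / L * (ε * ‖lqGain A B γ Estar Pstar‖ +
          γ * f ε * (max ‖A‖ ‖B‖ ^ 2 * (‖lqGain A B γ Estar Pstar‖ + 1))) := by
        gcongr ?_ * (?_ * _ + _ * ?_ * ?_)
        exact mul_add_mul_le_max_sq (norm_nonneg _) (norm_nonneg _) (norm_nonneg _)
    _ = _ := by ring

/-- Theorem (bound on the change of the optimal gain): if `‖E† − E*‖ ≤ ε`,
`‖P† − P*‖ ≤ f(ε)` for some `f : ℝ₊ → ℝ₊`, `‖E*⁻¹‖ < 1`, and `ε ≤ λ_min(E*)/2`, then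
`‖K† − K*‖ ≤ Γ₃·f(ε) + Γ₄·ε`, where
`Γ₃ = (2γ/λ_min(E*))·max{‖A‖,‖B‖}²·(‖K*‖+1)` and `Γ₄ = (2/λ_min(E*))·‖K*‖`. -/
theorem optimal_gain_change_bound {n m : ℕ}
    (A : Matrix (Fin n) (Fin n) ℝ) (B : Matrix (Fin n) (Fin m) ℝ)
    (γ : ℝ) (hγ0 : 0 < γ) (hγ1 : γ ≤ 1)
    (Estar Edag : Matrix (Fin m) (Fin m) ℝ) (hEstar : Estar.PosDef) (hEdag : Edag.PosDef)
    (hEinv : specNorm Estar⁻¹ < 1)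
    (Pstar Pdag : Matrix (Fin n) (Fin n) ℝ) (hPstar : Pstar.PosSemidef)
    (hPdag : Pdag.PosSemidef)
    (Kstar Kdag : Matrix (Fin m) (Fin n) ℝ)
    (hKstar : Kstar = -(γ • ((Estar + γ • (Bᵀ * Pstar * B))⁻¹ * (Bᵀ * Pstar * A))))
    (hKdag : Kdag = -(γ • ((Edag + γ • (Bᵀ * Pdag * B))⁻¹ * (Bᵀ * Pdag * A))))
    (f : ℝ → ℝ) (hf : ∀ x, 0 ≤ x → 0 ≤ f x)
    (ε : ℝ) (hε0 : 0 ≤ ε)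
    (hE : specNorm (Edag - Estar) ≤ ε) (hP : specNorm (Pdag - Pstar) ≤ f ε)
    (hε : ε ≤ lamMin Estar / 2) :
    specNorm (Kdag - Kstar) ≤
      2 * γ / lamMin Estar * max (specNorm A) (specNorm B) ^ 2 * (specNorm Kstar + 1) * f ε +
        2 / lamMin Estar * specNorm Kstar * ε :=
  optimal_gain_change_bound_general A B γ hγ0 Estar Edag hEstar hEdag Pstar Pdag hPstar hPdag Kstar
    Kdag hKstar hKdag f ε hE hP hε
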